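/- Let m be a positive integer and let a : Fin m → ℝ be such that a i > 0 for every i and the family (a i)_{i} is linearly independent over ℚ. Define the weighted ℓ¹ norm of v : Fin m → ℤ by ‖v‖_a = Σ_i a i * |v i| (with integer entries cast to ℝ). Then the group of additive (ℤ-linear) bijections f of Fin m → ℤ satisfying ‖f v‖_a = ‖v‖_a for all v is finite of order exactly 2^m, consisting precisely of the maps sending each standard basis vector e_j to ε_j • e_j with ε_j ∈ {1, −1}. -/

import Mathlib

/-!
Writing `e_j` for the standard basis vectors, an isometry `f` has
`‖f e_j‖_a = a_j`, i.e. `Σ_i |f(e_j)_i| • a_i = 1 • a_j`. Both sides are integer combinations of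
the `a_i`, so linear independence forces `|f(e_j)_i| = δ_ij`: `f` sends each `e_j` to `±e_j`.
Hence the isometries are exactly the sign changes `v ↦ ε • v` with `ε : ι → ℤˣ`, and these are
`2 ^ |ι|` distinct maps.
-/

section

variable {ι : Type*}

theorem Int.exists_units_smul_iff {M : Type*} [AddCommGroup M] (x y : M) :
    (∃ u : ℤˣ, x = u • y) ↔ ∃ n : ℤ, (n = 1 ∨ n = -1) ∧ x = n • y := by
  constructor
  · rintro ⟨u, rfl⟩
    exact ⟨u, by rcases Int.units_eq_one_or u with rfl | rfl <;> simp, Units.smul_def u y⟩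
  · rintro ⟨n, hn, rfl⟩
    exact ⟨(Int.isUnit_iff.mpr hn).unit, rfl⟩

variable [DecidableEq ι]

theorem exists_units_smul_single_of_abs_eq {w : ι → ℤ} {j : ι}
    (h : ∀ i, |w i| = |(Pi.single j 1 : ι → ℤ) i|) : ∃ u : ℤˣ, w = u • Pi.single j 1 := by
  have hj : IsUnit (w j) := Int.isUnit_iff_abs_eq.mpr (by simpa using h j)
  refine ⟨hj.unit, funext fun i => ?_⟩
  by_cases hij : i = j
  · subst hij; simp
  · simpa [hij] using h i

theorem units_smul_single (ε : ι → ℤˣ) (j : ι) :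
    ε • (Pi.single j 1 : ι → ℤ) = ε j • Pi.single j 1 := by
  ext i; by_cases h : i = j <;> simp [h]

theorem toAddEquiv_units_pi_injective :
    Function.Injective (DistribMulAction.toAddEquiv (ι → ℤ) : (ι → ℤˣ) → _) := by
  intro ε δ h
  funext j
  simpa [Units.ext_iff, Units.smul_def] using congrFun (DFunLike.congr_fun h (Pi.single j 1)) j

theorem addEquiv_ext_single [Finite ι] {f g : (ι → ℤ) ≃+ (ι → ℤ)}
    (h : ∀ j, f (Pi.single j 1) = g (Pi.single j 1)) : f = g := by
  refine AddEquiv.toAddMonoidHom_injective <| AddMonoidHom.functions_ext _ _ _ fun j => ?_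
  exact DFunLike.congr_fun (AddMonoidHom.ext_int
    (f := (f : (ι → ℤ) →+ (ι → ℤ)).comp (AddMonoidHom.single (fun _ : ι => ℤ) j))
    (g := (g : (ι → ℤ) →+ (ι → ℤ)).comp (AddMonoidHom.single (fun _ : ι => ℤ) j)) (h j))

theorem exists_toAddEquiv_eq_iff [Finite ι] (f : (ι → ℤ) ≃+ (ι → ℤ)) :
    (∃ ε : ι → ℤˣ, DistribMulAction.toAddEquiv (ι → ℤ) ε = f) ↔
      ∀ j, ∃ u : ℤˣ, f (Pi.single j 1) = u • Pi.single j 1 := by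
  constructor
  · rintro ⟨ε, rfl⟩ j
    exact ⟨ε j, units_smul_single ε j⟩
  · intro h
    choose ε hε using h
    exact ⟨ε, addEquiv_ext_single fun j => by simp [hε, units_smul_single]⟩

end

section

variable {ι : Type*} [Fintype ι]

def weightedL1Norm (a : ι → ℝ) (v : ι → ℤ) : ℝ := ∑ i, a i * |(v i : ℝ)|

theorem weightedL1Norm_eq_sum_zsmul (a : ι → ℝ) (v : ι → ℤ) :
    weightedL1Norm a v = ∑ i, |v i| • a i := by
  simp only [weightedL1Norm, zsmul_eq_mul, Int.cast_abs, mul_comm]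

theorem weightedL1Norm_units_smul (a : ι → ℝ) (ε : ι → ℤˣ) (v : ι → ℤ) :
    weightedL1Norm a (ε • v) = weightedL1Norm a v := by
  simp [weightedL1Norm, Units.smul_def, abs_mul, abs_unit_intCast]

theorem abs_apply_eq_of_weightedL1Norm_eq {a : ι → ℝ} (hli : LinearIndependent ℚ a)
    {v w : ι → ℤ} (h : weightedL1Norm a v = weightedL1Norm a w) (i : ι) : |v i| = |w i| := by
  rw [weightedL1Norm_eq_sum_zsmul, weightedL1Norm_eq_sum_zsmul] at h
  exact Fintype.linearIndependent_iffₛ.mp (hli.restrict_scalars' ℤ) _ _ h i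

variable [DecidableEq ι]

theorem forall_weightedL1Norm_map_eq_iff {a : ι → ℝ} (hli : LinearIndependent ℚ a)
    (f : (ι → ℤ) ≃+ (ι → ℤ)) :
    (∀ v, weightedL1Norm a (f v) = weightedL1Norm a v) ↔
      ∃ ε : ι → ℤˣ, DistribMulAction.toAddEquiv (ι → ℤ) ε = f := by
  constructor
  · intro hf
    exact (exists_toAddEquiv_eq_iff f).mpr fun j =>
      exists_units_smul_single_of_abs_eq (abs_apply_eq_of_weightedL1Norm_eq hli (hf _))
  · rintro ⟨ε, rfl⟩ v
    exact weightedL1Norm_units_smul a ε v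

theorem card_weightedL1Norm_isometries {a : ι → ℝ} (hli : LinearIndependent ℚ a) :
    Nat.card {f : (ι → ℤ) ≃+ (ι → ℤ) // ∀ v, weightedL1Norm a (f v) = weightedL1Norm a v} =
      2 ^ Fintype.card ι := by
  have hrange : Set.range (DistribMulAction.toAddEquiv (ι → ℤ) : (ι → ℤˣ) → _) =
      {f | ∀ v, weightedL1Norm a (f v) = weightedL1Norm a v} :=
    Set.ext fun f => (forall_weightedL1Norm_map_eq_iff hli f).symm
  rw [← Set.coe_ofPred, ← hrange, Nat.card_range_of_injective toAddEquiv_units_pi_injective,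
    Nat.card_fun, Nat.card_eq_fintype_card (α := ℤˣ), Fintype.card_units_int,
    Nat.card_eq_fintype_card]

end

theorem stmt_6_general (m : ℕ) (a : Fin m → ℝ)
    (hli : LinearIndependent ℚ a) :
    (∀ f : (Fin m → ℤ) ≃+ (Fin m → ℤ),
      (∀ v : Fin m → ℤ,
          ∑ i, a i * |((f v) i : ℝ)| = ∑ i, a i * |(v i : ℝ)|) ↔
        ∃ ε : Fin m → ℤ, (∀ i, ε i = 1 ∨ ε i = -1) ∧
          ∀ j, f (Pi.single j 1) = ε j • Pi.single j 1) ∧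
      Nat.card {f : (Fin m → ℤ) ≃+ (Fin m → ℤ) //
        ∀ v : Fin m → ℤ,
          ∑ i, a i * |((f v) i : ℝ)| = ∑ i, a i * |(v i : ℝ)|} = 2 ^ m := by
  refine ⟨fun f => ?_, (card_weightedL1Norm_isometries hli).trans (by rw [Fintype.card_fin])⟩
  refine (forall_weightedL1Norm_map_eq_iff hli f).trans ?_
  simp only [exists_toAddEquiv_eq_iff, Int.exists_units_smul_iff, Classical.skolem, forall_and]

/-- The group of additive bijections of `ℤ^m` preserving the weighted ℓ¹ norm
`Σ_i a i * |· i|` (with positive weights linearly independent over `ℚ`)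
consists exactly of the sign-change maps `e_j ↦ ε_j • e_j`, `ε_j = ±1`, and is
finite of order exactly `2^m`. -/
theorem stmt_6 (m : ℕ) (hm : 0 < m) (a : Fin m → ℝ)
    (hpos : ∀ i, 0 < a i) (hli : LinearIndependent ℚ a) :
    (∀ f : (Fin m → ℤ) ≃+ (Fin m → ℤ),
      (∀ v : Fin m → ℤ,
          ∑ i, a i * |((f v) i : ℝ)| = ∑ i, a i * |(v i : ℝ)|) ↔
        ∃ ε : Fin m → ℤ, (∀ i, ε i = 1 ∨ ε i = -1) ∧
          ∀ j, f (Pi.single j 1) = ε j • Pi.single j 1) ∧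
      Nat.card {f : (Fin m → ℤ) ≃+ (Fin m → ℤ) //
        ∀ v : Fin m → ℤ,
          ∑ i, a i * |((f v) i : ℝ)| = ∑ i, a i * |(v i : ℝ)|} = 2 ^ m :=
  stmt_6_general m a hli
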